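/- Let (Φ, E₊, E₋) be a generalized almost contact structure on a real vector space V, complexified. The subspace L⁺ = ℂ·E₊ ⊕ E^{(1,0)} is isotropic with respect to the complex-bilinear extension of the canonical pairing: ⟨u, v⟩ = 0 for all u, v ∈ L⁺. -/
import Mathlib


open TensorProduct

/-- The canonical neutral pairing on `V ⊕ V*`: `⟨X+α, Y+β⟩ = ½(β(X) + α(Y))`. -/
noncomputable def pair {V : Type*} [AddCommGroup V] [Module ℝ V]
    (u v : V × Module.Dual ℝ V) : ℝ := (v.2 u.1 + u.2 v.1) / 2

/-- The canonical pairing as a bilinear form on `V ⊕ V*`. -/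
noncomputable def pairB (V : Type*) [AddCommGroup V] [Module ℝ V] :
    LinearMap.BilinForm ℝ (V × Module.Dual ℝ V) :=
  LinearMap.mk₂ ℝ (fun u v => (v.2 u.1 + u.2 v.1) / 2)
    (by intros; simp; ring) (by intros; simp; ring)
    (by intros; simp; ring) (by intros; simp; ring)

lemma pair_symm {V : Type*} [AddCommGroup V] [Module ℝ V]
    (u v : V × Module.Dual ℝ V) : pair u v = pair v u := by
  unfold pair; ring

lemma pairB_eq {V : Type*} [AddCommGroup V] [Module ℝ V]
    (u v : V × Module.Dual ℝ V) : pairB V u v = pair u v := rfl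

lemma pair_add_left {V : Type*} [AddCommGroup V] [Module ℝ V]
    (u v w : V × Module.Dual ℝ V) : pair (u + v) w = pair u w + pair v w := by
  simp [pair, map_add, LinearMap.add_apply]; ring

lemma pair_neg_left {V : Type*} [AddCommGroup V] [Module ℝ V]
    (u w : V × Module.Dual ℝ V) : pair (-u) w = -pair u w := by
  simp [pair, map_neg, LinearMap.neg_apply]; ring

lemma pair_smul_left {V : Type*} [AddCommGroup V] [Module ℝ V]
    (a : ℝ) (u v : V × Module.Dual ℝ V) : pair (a • u) v = a * pair u v := by
  rw [← pairB_eq, ← pairB_eq, map_smul]; rfl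

set_option maxHeartbeats 1000000 in
/-- `L⁺ = ℂ·E₊ ⊕ E^{(1,0)}` is isotropic for the complex-bilinear extension of the
canonical pairing. -/
theorem stmt15 {V : Type*} [AddCommGroup V] [Module ℝ V] [FiniteDimensional ℝ V]
    (Φ : (V × Module.Dual ℝ V) →ₗ[ℝ] (V × Module.Dual ℝ V))
    (Ep Em : V × Module.Dual ℝ V)
    (hskew : ∀ u v, pair (Φ u) v + pair u (Φ v) = 0)
    (hsq : ∀ u, Φ (Φ u) = -u + (2 * pair Em u) • Ep + (2 * pair Ep u) • Em)
    (hpp : pair Ep Ep = 0) (hmm : pair Em Em = 0)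
    (hpm : 2 * pair Ep Em = 1) :
    ∀ u ∈ Submodule.span ℂ (insert ((1 : ℂ) ⊗ₜ[ℝ] Ep)
        {w : ℂ ⊗[ℝ] (V × Module.Dual ℝ V) | ∃ x, pair Ep x = 0 ∧ pair Em x = 0 ∧
          w = (1 : ℂ) ⊗ₜ[ℝ] x - Complex.I • ((1 : ℂ) ⊗ₜ[ℝ] Φ x)}),
      ∀ v ∈ Submodule.span ℂ (insert ((1 : ℂ) ⊗ₜ[ℝ] Ep)
        {w : ℂ ⊗[ℝ] (V × Module.Dual ℝ V) | ∃ x, pair Ep x = 0 ∧ pair Em x = 0 ∧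
          w = (1 : ℂ) ⊗ₜ[ℝ] x - Complex.I • ((1 : ℂ) ⊗ₜ[ℝ] Φ x)}),
        LinearMap.BilinForm.baseChange ℂ (pairB V) u v = 0 := by
  set S : Set (ℂ ⊗[ℝ] (V × Module.Dual ℝ V)) :=
    insert ((1 : ℂ) ⊗ₜ[ℝ] Ep)
      {w : ℂ ⊗[ℝ] (V × Module.Dual ℝ V) | ∃ x, pair Ep x = 0 ∧ pair Em x = 0 ∧
        w = (1 : ℂ) ⊗ₜ[ℝ] x - Complex.I • ((1 : ℂ) ⊗ₜ[ℝ] Φ x)} with hS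
  set B := LinearMap.BilinForm.baseChange ℂ (pairB V) with hB
  -- Φ Ep is a multiple of Ep
  have hpEp : ∀ u, pair Ep (Φ u) = pair (Φ u) Ep := fun u => pair_symm _ _
  have hEpPhiEp : pair Ep (Φ Ep) = 0 := by
    have h := hskew Ep Ep
    have := pair_symm (Φ Ep) Ep
    linarith
  have hPhiEpEp : pair (Φ Ep) Ep = 0 := by rw [← pair_symm]; exact hEpPhiEp
  have hsqEp : Φ (Φ Ep) = 0 := by
    have h1 : 2 * pair Em Ep = 1 := by rw [pair_symm]; exact hpm
    rw [hsq Ep, h1, hpp, one_smul, mul_zero, zero_smul, add_zero, neg_add_cancel]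
  have hPhiEp : Φ Ep = (2 * pair Em (Φ Ep)) • Ep := by
    have h := hsq (Φ Ep)
    rw [hsqEp, map_zero] at h
    have h2 : 2 * pair Ep (Φ Ep) = 0 := by rw [hEpPhiEp]; ring
    rw [h2, zero_smul, add_zero] at h
    have h' := h.symm
    rw [neg_add_eq_sub, sub_eq_zero] at h'
    exact h'.symm
  -- key: pair Ep (Φ x) = 0 if pair Ep x = 0
  have key : ∀ x, pair Ep x = 0 → pair Ep (Φ x) = 0 := by
    intro x hx
    have h := hskew Ep x
    have : pair (Φ Ep) x = 0 := by
      rw [hPhiEp, pair_smul_left, hx, mul_zero]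
    linarith
  -- generator-level vanishing
  have hgen : ∀ a ∈ S, ∀ b ∈ S, B a b = 0 := by
    rintro a (rfl | ⟨x, hxp, hxm, rfl⟩) b (rfl | ⟨y, hyp, hym, rfl⟩)
    · simp only [hB, LinearMap.BilinForm.baseChange_tmul, pairB_eq, hpp, zero_smul]
    · have h1 : pair Ep (Φ y) = 0 := key y hyp
      simp only [hB, map_sub, map_smul, LinearMap.sub_apply, LinearMap.smul_apply,
        LinearMap.BilinForm.baseChange_tmul, pairB_eq, hyp, h1, zero_smul, smul_zero, sub_zero]
    · have h1 : pair Ep (Φ x) = 0 := key x hxp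
      have h2 : pair x Ep = 0 := by rw [pair_symm]; exact hxp
      have h3 : pair (Φ x) Ep = 0 := by rw [pair_symm]; exact h1
      simp only [hB, map_sub, map_smul, LinearMap.sub_apply, LinearMap.smul_apply,
        LinearMap.BilinForm.baseChange_tmul, pairB_eq, h2, h3, zero_smul, smul_zero, sub_zero]
    · have hcross : pair (Φ x) y + pair x (Φ y) = 0 := hskew x y
      have hPhi2 : pair (Φ x) (Φ y) = pair x y := by
        have h := hskew (Φ x) y
        have h1 : pair (Φ (Φ x)) y = -pair x y := by
          rw [hsq x, pair_add_left, pair_add_left, pair_neg_left,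
            pair_smul_left, pair_smul_left]
          have e1 : pair Ep y = 0 := hyp
          have e2 : pair Em y = 0 := hym
          rw [e1, e2]
          ring
        linarith
      have hc : pair x (Φ y) = -pair (Φ x) y := by linarith [hcross]
      simp only [hB, map_sub, map_smul, LinearMap.sub_apply, LinearMap.smul_apply,
        LinearMap.BilinForm.baseChange_tmul, pairB_eq, hPhi2, hc, mul_one]
      simp only [Complex.real_smul, smul_eq_mul, mul_one]
      push_cast
      linear_combination (pair x y : ℂ) * Complex.I_sq
  -- extend to spans
  intro u hu v hv
  have hv' : ∀ a ∈ S, B a v = 0 := by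
    intro a ha
    have hle : Submodule.span ℂ S ≤ LinearMap.ker (B a) := by
      rw [Submodule.span_le]
      intro b hb
      exact LinearMap.mem_ker.mpr (hgen a ha b hb)
    exact LinearMap.mem_ker.mp (hle hv)
  have hle2 : Submodule.span ℂ S ≤ LinearMap.ker (B.flip v) := by
    rw [Submodule.span_le]
    intro a ha
    exact LinearMap.mem_ker.mpr (hv' a ha)
  exact LinearMap.mem_ker.mp (hle2 hu)
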